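/- arXiv:2409.03526 — 2 statements merged into one kernel-verified Lean document; each statement's English description precedes it below -/
import Mathlib

section
/- For every natural number k there exists a permutation π in the symmetric group S_k whose order is at least 2^{c·√k/log k} for some absolute constant c > 0 (for k sufficiently large). Concretely, the permutation built from disjoint cycles whose lengths are the distinct primes below √k has order equal to the product of those primes, which is at least 2^{π(√k)} where π(√k) denotes the number of primes below √k. -/
/-- For every `k` there is a permutation in `S_k` whose order is at least
`2 ^ π(√k)`, where `π(√k)` is the number of primes below `√k`. -/
theorem exists_perm_large_order (k : ℕ) :
    ∃ π : Equiv.Perm (Fin k),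
      2 ^ ((Finset.range (Nat.sqrt k + 1)).filter Nat.Prime).card ≤ orderOf π := by
  set s := Nat.sqrt k with hs
  set S : Finset ℕ := (Finset.range (s + 1)).filter Nat.Prime with hS
  have hprime : ∀ p ∈ S, Nat.Prime p := fun p hp => (Finset.mem_filter.mp hp).2
  -- sum of the primes is at most k
  have hsum : S.val.sum ≤ k := by
    have h1 : S.val.sum = ∑ p ∈ S, p := by rw [Finset.sum, Multiset.map_id']
    rcases Nat.eq_zero_or_pos s with h0 | hpos
    · have : S = ∅ := by
        apply Finset.eq_empty_of_forall_notMem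
        intro p hp
        have := Finset.mem_range.mp (Finset.mem_filter.mp hp).1
        have := (hprime p hp).two_le
        omega
      simp [this]
    · have h2 : ∑ p ∈ S, p ≤ ∑ p ∈ Finset.range (s + 1), p :=
        Finset.sum_le_sum_of_subset (Finset.filter_subset _ _)
      have h3 : ∑ p ∈ Finset.range (s + 1), p = (s + 1) * s / 2 := by
        rw [Finset.sum_range_id]; simp
      have h4 : (s + 1) * s / 2 ≤ s * s := by
        have : (s + 1) * s ≤ (s * s) * 2 := by nlinarith
        omega
      have h5 : s * s ≤ k := by have := Nat.sqrt_le' k; nlinarith [hs]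
      omega
  -- get a permutation with this cycle type
  obtain ⟨g, hg⟩ := (Equiv.Perm.exists_with_cycleType_iff (Fin k) (m := S.val)).mpr
    ⟨by simpa using hsum, fun a ha => (hprime a ha).two_le⟩
  refine ⟨g, ?_⟩
  have horder : orderOf g ≠ 0 := (orderOf_pos g).ne'
  -- the product of the primes divides the order
  have hdvd : ∏ p ∈ S, p ∣ orderOf g := by
    refine Finset.prod_primes_dvd _ (fun p hp => (hprime p hp).prime) (fun p hp => ?_)
    have : (p : ℕ) ∈ g.cycleType := by rw [hg]; exact hp
    exact Equiv.Perm.dvd_of_mem_cycleType this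
  have h2pow : 2 ^ S.card ≤ ∏ p ∈ S, p := by
    calc 2 ^ S.card = ∏ _p ∈ S, 2 := by rw [Finset.prod_const]
    _ ≤ ∏ p ∈ S, p := Finset.prod_le_prod (by simp) (fun p hp => (hprime p hp).two_le)
  exact le_trans h2pow (Nat.le_of_dvd (Nat.pos_of_ne_zero horder) hdvd)
end

section
/- Let q > n and let b_1,...,b_n ∈ {-1,0,1}. Define Γ : {-1,0,1} → U_q by Γ(-1) = ((1,0),1), Γ(0) = ((0,0),0), Γ(1) = ((0,1),1). Then the sequence b_1,...,b_n forms a 0/1-run (i.e., every prefix sum b_1+...+b_j lies in {0,1} and the total sum is 0) if and only if the product Γ(b_1)·Γ(b_2)·...·Γ(b_n) in U_q equals ((0,n'),0) for some n' ∈ {0,1,...,n}. -/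
/-- The coordinate-swap automorphism of `Zq x Zq`, viewed multiplicatively. -/
def tau (q : ℕ) : MulAut (Multiplicative (ZMod q × ZMod q)) :=
  AddEquiv.toMultiplicative (AddEquiv.prodComm : ZMod q × ZMod q ≃+ ZMod q × ZMod q)

lemma tau_sq (q : ℕ) : tau q * tau q = 1 := by ext x <;> rfl

/-- The action of `Z2` on `Zq x Zq`: `0` acts as identity, `1` swaps coordinates. -/
def phiU (q : ℕ) : Multiplicative (ZMod 2) →* MulAut (Multiplicative (ZMod q × ZMod q)) :=
  AddMonoidHom.toMultiplicativeLeft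
    (ZMod.lift 2 ⟨zmultiplesHom _ (Additive.ofMul (tau q)), by
      show ((2:ℕ):ℤ) • Additive.ofMul (tau q) = 0
      have h : ((2:ℕ):ℤ) • Additive.ofMul (tau q) = Additive.ofMul (tau q ^ ((2:ℕ):ℤ)) := rfl
      rw [h]
      have h2 : tau q ^ ((2:ℕ):ℤ) = 1 := by
        push_cast
        rw [zpow_two, tau_sq]
      rw [h2]; rfl⟩)

/-- The group `U_q = (Zq x Zq) ⋊ Z2`, with `Z2` acting by coordinate swap. -/
abbrev Uq (q : ℕ) :=
  SemidirectProduct (Multiplicative (ZMod q × ZMod q)) (Multiplicative (ZMod 2)) (phiU q)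

/-- The map `Γ : {-1,0,1} → U_q` with `Γ(-1) = ((1,0),1)`, `Γ(0) = ((0,0),0)`,
`Γ(1) = ((0,1),1)`. -/
def Gamma (q : ℕ) (b : ℤ) : Uq q :=
  if b = 1 then ⟨Multiplicative.ofAdd ((0, 1) : ZMod q × ZMod q), Multiplicative.ofAdd (1 : ZMod 2)⟩
  else if b = -1 then
    ⟨Multiplicative.ofAdd ((1, 0) : ZMod q × ZMod q), Multiplicative.ofAdd (1 : ZMod 2)⟩
  else 1

/-- State machine tracking the (x,y) coordinates as naturals. -/
def stUq (b : ℕ → ℤ) : ℕ → ℕ × ℕ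
  | 0 => (0, 0)
  | j + 1 =>
    if b j = 1 then
      (if Even ((stUq b j).1 + (stUq b j).2) then ((stUq b j).1, (stUq b j).2 + 1)
       else ((stUq b j).1 + 1, (stUq b j).2))
    else if b j = -1 then
      (if Even ((stUq b j).1 + (stUq b j).2) then ((stUq b j).1 + 1, (stUq b j).2)
       else ((stUq b j).1, (stUq b j).2 + 1))
    else stUq b j

lemma stUq_bound (b : ℕ → ℤ) : ∀ j, (stUq b j).1 + (stUq b j).2 ≤ j := by
  intro j
  induction j with
  | zero => simp [stUq]
  | succ j ih =>
    simp only [stUq]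
    split_ifs <;> (try simp) <;> omega

lemma natCast_even {k : ℕ} (h : Even k) : (k : ZMod 2) = 0 := by
  rw [ZMod.natCast_eq_zero_iff]; exact h.two_dvd

lemma natCast_odd {k : ℕ} (h : ¬ Even k) : (k : ZMod 2) = 1 := by
  rw [← ZMod.natCast_mod]
  rw [Nat.even_iff] at h
  have h2 : k % 2 = 1 := by omega
  rw [h2, Nat.cast_one]

lemma phiU_even (q : ℕ) {k : ℕ} (h : Even k)
    (a : Multiplicative (ZMod q × ZMod q)) :
    phiU q (Multiplicative.ofAdd ((k : ZMod 2))) a = a := by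
  rw [natCast_even h]; rfl

lemma phiU_odd (q : ℕ) {k : ℕ} (h : ¬ Even k) (a : ZMod q × ZMod q) :
    phiU q (Multiplicative.ofAdd ((k : ZMod 2))) (Multiplicative.ofAdd a)
      = Multiplicative.ofAdd (a.2, a.1) := by
  rw [natCast_odd h]; rfl

/-- The key invariant: the product of the first `j` generators is determined by `stUq`. -/
lemma prod_eq_stUq (q : ℕ) (b : ℕ → ℤ) : ∀ j,
    ((List.range j).map fun i => Gamma q (b i)).prod =
      ⟨Multiplicative.ofAdd ((((stUq b j).1 : ZMod q), ((stUq b j).2 : ZMod q))),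
        Multiplicative.ofAdd ((((stUq b j).1 + (stUq b j).2 : ℕ) : ZMod 2))⟩ := by
  intro j
  induction j with
  | zero =>
    simp only [List.range_zero, List.map_nil, List.prod_nil, stUq]
    norm_num
    rfl
  | succ j ih =>
    rw [List.range_succ, List.map_append, List.prod_append, ih]
    simp only [List.map_cons, List.map_nil, List.prod_cons, List.prod_nil, mul_one]
    by_cases h1 : b j = 1
    · have hG : Gamma q (b j) = ⟨Multiplicative.ofAdd ((0, 1) : ZMod q × ZMod q),
          Multiplicative.ofAdd (1 : ZMod 2)⟩ := by simp [Gamma, h1]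
      by_cases he : Even ((stUq b j).1 + (stUq b j).2)
      · have hst : stUq b (j + 1) = ((stUq b j).1, (stUq b j).2 + 1) := by
          simp [stUq, h1, he]
        rw [hG, hst, SemidirectProduct.mul_def]
        dsimp only
        rw [phiU_even q he, ← ofAdd_add, ← ofAdd_add]
        congr 1 <;> simp [Prod.ext_iff, mul_comm, mul_assoc, mul_left_comm]
      · have hst : stUq b (j + 1) = ((stUq b j).1 + 1, (stUq b j).2) := by
          simp [stUq, h1, he]
        rw [hG, hst, SemidirectProduct.mul_def]
        dsimp only
        rw [phiU_odd q he, ← ofAdd_add, ← ofAdd_add]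
        congr 1 <;> simp [Prod.ext_iff, mul_comm, mul_assoc, mul_left_comm]
    · by_cases h2 : b j = -1
      · have hG : Gamma q (b j) = ⟨Multiplicative.ofAdd ((1, 0) : ZMod q × ZMod q),
            Multiplicative.ofAdd (1 : ZMod 2)⟩ := by simp [Gamma, h1, h2]
        by_cases he : Even ((stUq b j).1 + (stUq b j).2)
        · have hst : stUq b (j + 1) = ((stUq b j).1 + 1, (stUq b j).2) := by
            simp [stUq, h1, h2, he]
          rw [hG, hst, SemidirectProduct.mul_def]
          dsimp only
          rw [phiU_even q he, ← ofAdd_add, ← ofAdd_add]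
          congr 1 <;> simp [Prod.ext_iff, mul_comm, mul_assoc, mul_left_comm]
        · have hst : stUq b (j + 1) = ((stUq b j).1, (stUq b j).2 + 1) := by
            simp [stUq, h1, h2, he]
          rw [hG, hst, SemidirectProduct.mul_def]
          dsimp only
          rw [phiU_odd q he, ← ofAdd_add, ← ofAdd_add]
          congr 1 <;> simp [Prod.ext_iff, mul_comm, mul_assoc, mul_left_comm]
      · have hG : Gamma q (b j) = 1 := by simp [Gamma, h1, h2]
        have hst : stUq b (j + 1) = stUq b j := by simp [stUq, h1, h2]
        rw [hG, hst, mul_one]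
lemma run_char (n : ℕ) (b : ℕ → ℤ) (hb : ∀ i < n, b i ∈ ({-1, 0, 1} : Set ℤ)) :
    ∀ j ≤ n,
      ((∀ i ≤ j, (∑ k ∈ Finset.range i, b k) ∈ ({0, 1} : Set ℤ)) ↔ (stUq b j).1 = 0)
      ∧ ((stUq b j).1 = 0 →
          (∑ k ∈ Finset.range j, b k) = (((stUq b j).1 + (stUq b j).2) % 2 : ℕ)) := by
  intro j
  induction j with
  | zero =>
    intro _
    constructor
    · simp only [Nat.le_zero]
      constructor
      · intro _; rfl
      · intro _ i hi; subst hi; simp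
    · intro _; simp [stUq]
  | succ j ih =>
    intro hjn
    have ihj := ih (by omega)
    obtain ⟨IH1, IH2⟩ := ihj
    have hsplit : (∀ i ≤ j + 1, (∑ k ∈ Finset.range i, b k) ∈ ({0, 1} : Set ℤ)) ↔
        ((∀ i ≤ j, (∑ k ∈ Finset.range i, b k) ∈ ({0, 1} : Set ℤ)) ∧
          (∑ k ∈ Finset.range (j + 1), b k) ∈ ({0, 1} : Set ℤ)) := by
      constructor
      · exact fun h => ⟨fun i hi => h i (hi.trans (Nat.le_succ j)), h (j + 1) le_rfl⟩
      · rintro ⟨h, hq⟩ i hi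
        rcases eq_or_lt_of_le hi with rfl | h'
        · exact hq
        · exact h i (Nat.lt_succ_iff.mp h')
    have hbj := hb j (by omega)
    simp only [Set.mem_insert_iff, Set.mem_singleton_iff] at hbj
    rcases hbj with h2 | h0 | h1
    · -- b j = -1
      have hsum : (∑ k ∈ Finset.range (j + 1), b k) = (∑ k ∈ Finset.range j, b k) + (-1) := by
        rw [Finset.sum_range_succ, h2]
      by_cases he : Even ((stUq b j).1 + (stUq b j).2)
      · have hst : stUq b (j + 1) = ((stUq b j).1 + 1, (stUq b j).2) := by
          simp [stUq, h2, he]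
        rw [hst]
        dsimp only
        constructor
        · rw [hsplit]
          constructor
          · rintro ⟨h, hq⟩
            exfalso
            have hx0 := IH1.mp h
            have hP := IH2 hx0
            have hke := Nat.even_iff.mp he
            rw [hsum] at hq
            simp only [Set.mem_insert_iff, Set.mem_singleton_iff] at hq
            omega
          · intro h; omega
        · intro h; omega
      · have hst : stUq b (j + 1) = ((stUq b j).1, (stUq b j).2 + 1) := by
          simp [stUq, h2, he]
        rw [hst]
        dsimp only
        have hko := Nat.not_even_iff.mp he
        constructor
        · rw [hsplit]
          constructor
          · rintro ⟨h, _⟩; exact IH1.mp h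
          · intro hx0
            refine ⟨IH1.mpr hx0, ?_⟩
            have hP := IH2 hx0
            rw [hsum]
            simp only [Set.mem_insert_iff, Set.mem_singleton_iff]
            omega
        · intro hx0
          have hP := IH2 hx0
          rw [hsum]
          omega
    · -- b j = 0
      have hsum : (∑ k ∈ Finset.range (j + 1), b k) = (∑ k ∈ Finset.range j, b k) := by
        rw [Finset.sum_range_succ, h0, add_zero]
      have hst : stUq b (j + 1) = stUq b j := by simp [stUq, h0]
      rw [hst, hsum]
      refine ⟨?_, IH2⟩
      rw [hsplit, hsum]
      constructor
      · rintro ⟨h, _⟩; exact IH1.mp h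
      · intro hx0
        exact ⟨IH1.mpr hx0, (IH1.mpr hx0) j le_rfl⟩
    · -- b j = 1
      have hsum : (∑ k ∈ Finset.range (j + 1), b k) = (∑ k ∈ Finset.range j, b k) + 1 := by
        rw [Finset.sum_range_succ, h1]
      by_cases he : Even ((stUq b j).1 + (stUq b j).2)
      · have hst : stUq b (j + 1) = ((stUq b j).1, (stUq b j).2 + 1) := by
          simp [stUq, h1, he]
        rw [hst]
        dsimp only
        have hke := Nat.even_iff.mp he
        constructor
        · rw [hsplit]
          constructor
          · rintro ⟨h, _⟩; exact IH1.mp h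
          · intro hx0
            refine ⟨IH1.mpr hx0, ?_⟩
            have hP := IH2 hx0
            rw [hsum]
            simp only [Set.mem_insert_iff, Set.mem_singleton_iff]
            omega
        · intro hx0
          have hP := IH2 hx0
          rw [hsum]
          omega
      · have hst : stUq b (j + 1) = ((stUq b j).1 + 1, (stUq b j).2) := by
          simp [stUq, h1, he]
        rw [hst]
        dsimp only
        have hko := Nat.not_even_iff.mp he
        constructor
        · rw [hsplit]
          constructor
          · rintro ⟨h, hq⟩
            exfalso
            have hx0 := IH1.mp h
            have hP := IH2 hx0
            rw [hsum] at hq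
            simp only [Set.mem_insert_iff, Set.mem_singleton_iff] at hq
            omega
          · intro h; omega
        · intro h; omega
/-- A `{-1,0,1}`-sequence `b_1,…,b_n` is a 0/1-run iff the product
`Γ(b_1)·…·Γ(b_n)` in `U_q` (with `q > n`) equals `((0,n'),0)` for some `n' ≤ n`. -/
theorem run_iff_Uq_product (q n : ℕ) (hq : n < q) (b : ℕ → ℤ)
    (hb : ∀ i < n, b i ∈ ({-1, 0, 1} : Set ℤ)) :
    ((∑ i ∈ Finset.range n, b i = 0) ∧
        ∀ j ≤ n, (∑ i ∈ Finset.range j, b i) ∈ ({0, 1} : Set ℤ)) ↔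
      ∃ n' ≤ n, ((List.range n).map fun i => Gamma q (b i)).prod =
        ⟨Multiplicative.ofAdd ((0, (n' : ZMod q)) : ZMod q × ZMod q),
          Multiplicative.ofAdd (0 : ZMod 2)⟩ := by
  have hprod := prod_eq_stUq q b n
  have hbound := stUq_bound b n
  obtain ⟨hc1, hc2⟩ := run_char n b hb n le_rfl
  constructor
  · rintro ⟨hsum0, hpre⟩
    have hx0 : (stUq b n).1 = 0 := hc1.mp (fun i hi => hpre i hi)
    have hP := hc2 hx0
    have hke : ((stUq b n).1 + (stUq b n).2) % 2 = 0 := by omega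
    refine ⟨(stUq b n).2, by omega, ?_⟩
    have h1 : ((stUq b n).1 : ZMod q) = 0 := by rw [hx0]; simp
    have h2 : (((stUq b n).1 + (stUq b n).2 : ℕ) : ZMod 2) = 0 :=
      natCast_even (Nat.even_iff.mpr hke)
    rw [hprod, h1, h2]
  · rintro ⟨n', hn', hpeq⟩
    rw [hprod] at hpeq
    have hleft := congrArg SemidirectProduct.left hpeq
    have hright := congrArg SemidirectProduct.right hpeq
    dsimp only at hleft hright
    have hpair : (((stUq b n).1 : ZMod q), ((stUq b n).2 : ZMod q))
        = ((0 : ZMod q), (n' : ZMod q)) := Multiplicative.ofAdd.injective hleft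
    have hx : ((stUq b n).1 : ZMod q) = 0 := (Prod.ext_iff.mp hpair).1
    have hz : (((stUq b n).1 + (stUq b n).2 : ℕ) : ZMod 2) = 0 :=
      Multiplicative.ofAdd.injective hright
    have hqdvd : q ∣ (stUq b n).1 := (ZMod.natCast_eq_zero_iff _ q).mp hx
    have hx0 : (stUq b n).1 = 0 := Nat.eq_zero_of_dvd_of_lt hqdvd (by omega)
    have h2dvd : 2 ∣ ((stUq b n).1 + (stUq b n).2) :=
      (ZMod.natCast_eq_zero_iff _ 2).mp hz
    have hpre := hc1.mpr hx0
    have hP := hc2 hx0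
    exact ⟨by omega, hpre⟩
end
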